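/- arXiv:2509.18510 — 4 statements merged into one kernel-verified Lean document; each statement's English description precedes it below -/
import Mathlib

section
/- Let S = {s, u_1, ..., u_{k-1}} and T = {t, u_1, ..., u_{k-1}} be adjacent bases of a matroid, let u = u_i be a common element, and set U' = (S ∩ T) - u. If U' + s + t is not a basis, then N(S - u) = N(T - u), where N(B - u) = {x ∈ E : B - u + x is a basis}. -/
open scoped Classical BigOperators

/-- A matroid given by its set of bases: a nonempty antichain of finite
subsets satisfying the basis exchange property. -/
structure FinMatroid (α : Type*) [DecidableEq α] where
  IsBase : Finset α → Prop
  nonempty : ∃ B, IsBase B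
  antichain : ∀ B₁ B₂, IsBase B₁ → IsBase B₂ → B₁ ⊆ B₂ → B₁ = B₂
  exchange : ∀ B₁ B₂, IsBase B₁ → IsBase B₂ → ∀ b₁ ∈ B₁ \ B₂,
      ∃ b₂ ∈ B₂ \ B₁, IsBase (insert b₂ (B₁.erase b₁))

namespace FinMatroid

variable {α : Type*} [Fintype α] [DecidableEq α] (M : FinMatroid α)

/-- `N(B - u)`: the elements `x` such that `B - u + x` is a basis. -/
noncomputable def exNbr (B : Finset α) (u : α) : Finset α :=
  Finset.univ.filter (fun x => M.IsBase (insert x (B.erase u)))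

/-- The bases containing `B - u`, i.e. the possible results of an up-step after
dropping `u` from `B`. -/
noncomputable def up (B : Finset α) (u : α) : Finset (Finset α) :=
  Finset.univ.filter (fun B' => M.IsBase B' ∧ B.erase u ⊆ B')

/-- The transition probability of the basis exchange (down-up) walk:
drop a uniform element `u` of the current basis `S`, then move to a uniform
basis containing `S - u`. -/
noncomputable def step (S B' : Finset α) : ℝ :=
  ∑ u ∈ S, (1 / (S.card : ℝ)) * (if B' ∈ M.up S u then 1 / ((M.up S u).card : ℝ) else 0)

/-- The metric induced by the basis exchange walk on bases: the graph distance
in the basis exchange graph, which equals `#(S \ T)`. -/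
noncomputable def dist (S T : Finset α) : ℝ := ((S \ T).card : ℝ)

/-- `π` is a coupling of the distributions `μ` and `ν` on `Finset α`. -/
def IsCoupling (μ ν : Finset α → ℝ) (π : Finset α → Finset α → ℝ) : Prop :=
  (∀ x y, 0 ≤ π x y) ∧ (∀ x, ∑ y : Finset α, π x y = μ x) ∧
    (∀ y, ∑ x : Finset α, π x y = ν y)

/-- The expected distance under a coupling `π`. -/
noncomputable def cost (π : Finset α → Finset α → ℝ) : ℝ :=
  ∑ x : Finset α, ∑ y : Finset α, π x y * dist x y

/-- Wasserstein distance between two distributions on bases. -/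
noncomputable def W (μ ν : Finset α → ℝ) : ℝ :=
  sInf {c | ∃ π, IsCoupling μ ν π ∧ cost π = c}

/-- The Ollivier–Ricci curvature of the basis exchange walk: the largest `κ`
such that `W(P(S,·), P(T,·)) ≤ (1 - κ) · d(S,T)` for all bases `S`, `T`. -/
noncomputable def curvature : ℝ :=
  sSup {κ : ℝ | ∀ S T, M.IsBase S → M.IsBase T →
    W (M.step S) (M.step T) ≤ (1 - κ) * dist S T}

end FinMatroid

private lemma finmatroid_key {α : Type*} [DecidableEq α] (M : FinMatroid α)
    (U' : Finset α) (s t u : α)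
    (hu : u ∉ U')
    (hsu : s ≠ u) (htu : t ≠ u)
    (hS : M.IsBase (insert s (insert u U')))
    (hT : M.IsBase (insert t (insert u U')))
    (hnot : ¬ M.IsBase (insert s (insert t U')))
    (x : α) (hx : M.IsBase (insert x (insert s U'))) :
    M.IsBase (insert x (insert t U')) := by
  by_cases hxm : x ∈ insert s U'
  · exfalso
    rw [Finset.insert_eq_self.2 hxm] at hx
    have hsub : insert s U' ⊆ insert s (insert u U') := by
      intro y hy; rcases Finset.mem_insert.1 hy with h|h
      · simp [h]
      · simp [h]
    have := M.antichain _ _ hx hS hsub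
    have : u ∈ insert s U' := this ▸ (by simp : u ∈ insert s (insert u U'))
    rcases Finset.mem_insert.1 this with h|h
    · exact hsu h.symm
    · exact hu h
  · skip
    have hxs : x ≠ s := fun h => hxm (by simp [h])
    have hxU : x ∉ U' := fun h => hxm (by simp [h])
    by_cases hxt : x = t
    · exact absurd (by rwa [hxt, Finset.insert_comm] at hx) hnot
    by_cases hxu : x = u
    · rwa [hxu, Finset.insert_comm]
    have huT : u ∈ (insert t (insert u U')) \ (insert x (insert s U')) := by
      simp [Finset.mem_sdiff, hu, Ne.symm hxu, Ne.symm hsu]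
    obtain ⟨b₂, hb₂, hbase⟩ := M.exchange _ _ hT hx u huT
    have herase : (insert t (insert u U')).erase u = insert t U' := by
      rw [Finset.insert_comm, Finset.erase_insert (by simp [Ne.symm htu, hu])]
    rw [herase] at hbase
    rw [Finset.mem_sdiff] at hb₂
    obtain ⟨hb₂B, hb₂T⟩ := hb₂
    have hb₂U : b₂ ∉ U' := fun h => hb₂T (by simp [h])
    rcases Finset.mem_insert.1 hb₂B with h|h
    · rwa [h] at hbase
    rcases Finset.mem_insert.1 h with h|h
    · exact absurd (by rwa [h] at hbase) hnot
    · exact absurd h hb₂U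

/-- If `S = U' + s + u` and `T = U' + t + u` are adjacent bases and
`U' + s + t` is not a basis, then `N(S - u) = N(T - u)`. -/
theorem stmt2 {α : Type*} [Fintype α] [DecidableEq α] (M : FinMatroid α)
    (U' : Finset α) (s t u : α)
    (hs : s ∉ U') (ht : t ∉ U') (hu : u ∉ U')
    (hst : s ≠ t) (hsu : s ≠ u) (htu : t ≠ u)
    (hS : M.IsBase (insert s (insert u U')))
    (hT : M.IsBase (insert t (insert u U')))
    (hnot : ¬ M.IsBase (insert s (insert t U'))) :
    M.exNbr (insert s (insert u U')) u = M.exNbr (insert t (insert u U')) u :=  by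
  have herS : (insert s (insert u U')).erase u = insert s U' := by
    rw [Finset.insert_comm, Finset.erase_insert (by simp [Ne.symm hsu, hu])]
  have herT : (insert t (insert u U')).erase u = insert t U' := by
    rw [Finset.insert_comm, Finset.erase_insert (by simp [Ne.symm htu, hu])]
  have hnot' : ¬ M.IsBase (insert t (insert s U')) := by
    rwa [Finset.insert_comm]
  ext x
  simp only [FinMatroid.exNbr, Finset.mem_filter, Finset.mem_univ, true_and, herS, herT]
  constructor
  · exact finmatroid_key M U' s t u hu hsu htu hS hT hnot x
  · exact finmatroid_key M U' t s u hu htu hsu hT hS hnot' x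
end

section
/- The basis exchange walk on any matroid with ground set of size n ≤ 7 has non-negative Ollivier–Ricci curvature. -/
open scoped Classical BigOperators

namespace FinMatroid

variable {α : Type*} [Fintype α] [DecidableEq α] (M : FinMatroid α)

-- ===== auxiliary =====

lemma dist_nonneg' (S T : Finset α) : 0 ≤ dist S T := Nat.cast_nonneg _

lemma dist_self' (S : Finset α) : dist S S = 0 := by simp [dist]

lemma dist_triangle' (x y z : Finset α) : dist x z ≤ dist x y + dist y z := by
  have hsub : x \ z ⊆ (x \ y) ∪ (y \ z) := by
    intro e he
    simp only [Finset.mem_sdiff, Finset.mem_union] at *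
    tauto
  have := (Finset.card_le_card hsub).trans (Finset.card_union_le _ _)
  unfold dist
  exact_mod_cast this

lemma cost_nonneg {π : Finset α → Finset α → ℝ} (h : ∀ x y, 0 ≤ π x y) :
    0 ≤ cost (α := α) π :=
  Finset.sum_nonneg fun x _ => Finset.sum_nonneg fun y _ =>
    mul_nonneg (h x y) (dist_nonneg' x y)

lemma diag_coupling (μ : Finset α → ℝ) (hμ : ∀ x, 0 ≤ μ x) :
    IsCoupling μ μ (fun x y => if x = y then μ x else 0) ∧
      cost (fun x y : Finset α => if x = y then μ x else 0) = 0 := by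
  refine ⟨⟨fun x y => by dsimp only; split_ifs; exacts [hμ x, le_refl 0],
    fun x => by simp, fun y => by simp⟩, ?_⟩
  unfold cost
  refine Finset.sum_eq_zero fun x _ => Finset.sum_eq_zero fun y _ => ?_
  by_cases h : x = y
  · subst h; simp [dist_self']
  · simp [h]

lemma glue_coupling {μ ν ρ : Finset α → ℝ} {π₁ π₂ : Finset α → Finset α → ℝ}
    (h1 : IsCoupling μ ν π₁) (h2 : IsCoupling ν ρ π₂) :
    ∃ π, IsCoupling μ ρ π ∧ cost π ≤ cost π₁ + cost π₂ := by
  obtain ⟨h1n, h1r, h1c⟩ := h1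
  obtain ⟨h2n, h2r, h2c⟩ := h2
  have hν : ∀ y, 0 ≤ ν y := fun y => (h1c y) ▸ Finset.sum_nonneg fun x _ => h1n x y
  have hz1 : ∀ y, ν y = 0 → ∀ x, π₁ x y = 0 := by
    intro y hy x
    have := (Finset.sum_eq_zero_iff_of_nonneg (fun x _ => h1n x y)).1 ((h1c y).trans hy)
    exact this x (Finset.mem_univ x)
  have hz2 : ∀ y, ν y = 0 → ∀ z, π₂ y z = 0 := by
    intro y hy z
    have := (Finset.sum_eq_zero_iff_of_nonneg (fun z _ => h2n y z)).1 ((h2r y).trans hy)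
    exact this z (Finset.mem_univ z)
  set g : Finset α → Finset α → Finset α → ℝ :=
    fun x y z => if ν y = 0 then 0 else π₁ x y * π₂ y z / ν y with hg
  have hgnn : ∀ x y z, 0 ≤ g x y z := by
    intro x y z
    by_cases h : ν y = 0
    · simp [hg, h]
    · simp only [hg, if_neg h]
      exact div_nonneg (mul_nonneg (h1n x y) (h2n y z)) (hν y)
  have hsum2 : ∀ x y, ∑ z : Finset α, g x y z = π₁ x y := by
    intro x y
    by_cases h : ν y = 0
    · simp [hg, h, hz1 y h x]
    · simp only [hg, if_neg h]
      rw [← Finset.sum_div, ← Finset.mul_sum, h2r y, mul_div_assoc, div_self h, mul_one]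
  have hsum1 : ∀ z y, ∑ x : Finset α, g x y z = π₂ y z := by
    intro z y
    by_cases h : ν y = 0
    · simp [hg, h, hz2 y h z]
    · simp only [hg, if_neg h]
      rw [← Finset.sum_div, ← Finset.sum_mul, h1c y, mul_comm, mul_div_assoc, div_self h,
        mul_one]
  refine ⟨fun x z => ∑ y : Finset α, g x y z,
    ⟨fun x z => Finset.sum_nonneg fun y _ => hgnn x y z, fun x => ?_, fun z => ?_⟩, ?_⟩
  · rw [Finset.sum_comm]
    simp_rw [hsum2]
    exact h1r x
  · rw [Finset.sum_comm]
    simp_rw [hsum1]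
    exact h2c z
  · have e1 : (∑ x : Finset α, ∑ z : Finset α, ∑ y : Finset α, g x y z * dist x y)
        = cost π₁ := by
      unfold cost
      refine Finset.sum_congr rfl fun x _ => ?_
      rw [Finset.sum_comm]
      refine Finset.sum_congr rfl fun y _ => ?_
      rw [← Finset.sum_mul, hsum2]
    have e2 : (∑ x : Finset α, ∑ z : Finset α, ∑ y : Finset α, g x y z * dist y z)
        = cost π₂ := by
      calc (∑ x : Finset α, ∑ z : Finset α, ∑ y : Finset α, g x y z * dist y z)
          = ∑ z : Finset α, ∑ x : Finset α, ∑ y : Finset α, g x y z * dist y z :=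
            Finset.sum_comm
        _ = ∑ z : Finset α, ∑ y : Finset α, ∑ x : Finset α, g x y z * dist y z :=
            Finset.sum_congr rfl fun z _ => Finset.sum_comm
        _ = ∑ z : Finset α, ∑ y : Finset α, π₂ y z * dist y z := by
            refine Finset.sum_congr rfl fun z _ => Finset.sum_congr rfl fun y _ => ?_
            rw [← Finset.sum_mul, hsum1]
        _ = ∑ y : Finset α, ∑ z : Finset α, π₂ y z * dist y z := Finset.sum_comm
        _ = cost π₂ := rfl
    calc cost (fun x z : Finset α => ∑ y : Finset α, g x y z)
        = ∑ x : Finset α, ∑ z : Finset α, (∑ y : Finset α, g x y z) * dist x z := rfl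
      _ = ∑ x : Finset α, ∑ z : Finset α, ∑ y : Finset α, g x y z * dist x z := by
          simp_rw [Finset.sum_mul]
      _ ≤ ∑ x : Finset α, ∑ z : Finset α, ∑ y : Finset α, g x y z * (dist x y + dist y z) := by
          refine Finset.sum_le_sum fun x _ => Finset.sum_le_sum fun z _ =>
            Finset.sum_le_sum fun y _ =>
              mul_le_mul_of_nonneg_left (dist_triangle' x y z) (hgnn x y z)
      _ = (∑ x : Finset α, ∑ z : Finset α, ∑ y : Finset α, g x y z * dist x y)
          + (∑ x : Finset α, ∑ z : Finset α, ∑ y : Finset α, g x y z * dist y z) := by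
          simp_rw [mul_add, Finset.sum_add_distrib]
      _ ≤ cost π₁ + cost π₂ := le_of_eq (by rw [e1, e2])

lemma mix_coupling (I : Finset α) (w : α → ℝ) (hw : ∀ u, 0 ≤ w u)
    (μ ν : α → Finset α → ℝ) (π : α → Finset α → Finset α → ℝ)
    (h : ∀ u ∈ I, IsCoupling (μ u) (ν u) (π u)) :
    IsCoupling (fun B => ∑ u ∈ I, w u * μ u B) (fun B => ∑ u ∈ I, w u * ν u B)
      (fun x y => ∑ u ∈ I, w u * π u x y) ∧
      cost (fun x y => ∑ u ∈ I, w u * π u x y) = ∑ u ∈ I, w u * cost (π u) := by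
  constructor
  · refine ⟨fun x y => Finset.sum_nonneg fun u hu => mul_nonneg (hw u) ((h u hu).1 x y),
      fun x => ?_, fun y => ?_⟩
    · rw [Finset.sum_comm]
      exact Finset.sum_congr rfl fun u hu => by rw [← Finset.mul_sum, (h u hu).2.1 x]
    · rw [Finset.sum_comm]
      exact Finset.sum_congr rfl fun u hu => by rw [← Finset.mul_sum, (h u hu).2.2 y]
  · calc (∑ x : Finset α, ∑ y : Finset α, (∑ u ∈ I, w u * π u x y) * dist x y)
        = ∑ x : Finset α, ∑ y : Finset α, ∑ u ∈ I, w u * (π u x y * dist x y) := by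
          simp_rw [Finset.sum_mul, mul_assoc]
      _ = ∑ x : Finset α, ∑ u ∈ I, ∑ y : Finset α, w u * (π u x y * dist x y) :=
          Finset.sum_congr rfl fun x _ => Finset.sum_comm
      _ = ∑ u ∈ I, ∑ x : Finset α, ∑ y : Finset α, w u * (π u x y * dist x y) :=
          Finset.sum_comm
      _ = ∑ u ∈ I, w u * cost (π u) := by
          refine Finset.sum_congr rfl fun u _ => ?_
          unfold cost
          rw [Finset.mul_sum]
          exact Finset.sum_congr rfl fun x _ => by rw [Finset.mul_sum]

noncomputable def unif (U : Finset (Finset α)) : Finset α → ℝ :=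
  fun B => if B ∈ U then 1 / (U.card : ℝ) else 0

lemma unif_nonneg (U : Finset (Finset α)) : ∀ B, 0 ≤ unif U B := by
  intro B; unfold unif; split_ifs <;> positivity

lemma unif_sum (U : Finset (Finset α)) (h : U.Nonempty) :
    ∑ B : Finset α, unif U B = 1 := by
  unfold unif
  rw [Finset.sum_ite_mem, Finset.univ_inter, Finset.sum_const, nsmul_eq_mul,
    mul_one_div, div_self]
  exact_mod_cast Finset.card_ne_zero_of_mem h.choose_spec

lemma unifBij {U V : Finset (Finset α)} (hU : U.Nonempty) (f : Finset α → Finset α)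
    (hfV : ∀ B ∈ U, f B ∈ V)
    (hinj : ∀ B₁ ∈ U, ∀ B₂ ∈ U, f B₁ = f B₂ → B₁ = B₂)
    (hsurj : ∀ C ∈ V, ∃ B ∈ U, f B = C)
    (hd : ∀ B ∈ U, dist B (f B) ≤ 1) :
    ∃ π, IsCoupling (unif U) (unif V) π ∧ cost π ≤ 1 := by
  have hcard : U.card = V.card := by
    refine Finset.card_bij (fun B _ => f B) hfV hinj ?_
    intro C hC
    obtain ⟨B, hB, hfB⟩ := hsurj C hC
    exact ⟨B, hB, hfB⟩
  have hUc : (0:ℝ) < (U.card : ℝ) := by exact_mod_cast Finset.card_pos.2 hU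
  set c : ℝ := 1 / (U.card : ℝ) with hc
  have hc0 : 0 ≤ c := by positivity
  refine ⟨fun x y => if x ∈ U ∧ y = f x then c else 0, ⟨?_, ?_, ?_⟩, ?_⟩
  · intro x y; dsimp only; split_ifs; exacts [hc0, le_refl 0]
  · intro x
    by_cases hx : x ∈ U
    · have h1 : ∀ y, (if x ∈ U ∧ y = f x then c else 0) = (if y = f x then c else 0) :=
        fun y => by simp [hx]
      simp_rw [h1]
      rw [Finset.sum_ite_eq' Finset.univ (f x) (fun _ => c)]
      simp [unif, hx, hc]
    · simp [hx, unif]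
  · intro y
    have step1 : ∀ x, (if x ∈ U ∧ y = f x then c else 0)
        = (if x ∈ U then (if y = f x then c else 0) else 0) :=
      fun x => by split_ifs <;> tauto
    simp_rw [step1]
    rw [Finset.sum_ite_mem, Finset.univ_inter]
    by_cases hy : y ∈ V
    · obtain ⟨B, hB, hfB⟩ := hsurj y hy
      have h2 : ∀ x ∈ U, (if y = f x then c else 0) = (if x = B then c else 0) := by
        intro x hx
        by_cases h : x = B
        · subst h; simp [hfB.symm]
        · have hne : y ≠ f x := fun he => h (hinj x hx B hB (by rw [← he, hfB]))
          simp [hne, h]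
      rw [Finset.sum_congr rfl h2, Finset.sum_ite_eq' U B, if_pos hB]
      simp [unif, hy, hc, hcard]
    · have h2 : ∀ x ∈ U, (if y = f x then c else 0) = 0 := by
        intro x hx
        rw [if_neg]
        intro he; exact hy (he ▸ hfV x hx)
      rw [Finset.sum_congr rfl h2, Finset.sum_const, smul_zero]
      simp [unif, hy]
  · unfold cost
    have hx : ∀ x, (∑ y : Finset α, (if x ∈ U ∧ y = f x then c else 0) * dist x y)
        = if x ∈ U then c * dist x (f x) else 0 := by
      intro x
      by_cases h : x ∈ U
      · simp [h, ite_mul, Finset.sum_ite_eq']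
      · simp [h]
    simp_rw [hx]
    rw [Finset.sum_ite_mem, Finset.univ_inter]
    calc ∑ x ∈ U, c * dist x (f x) ≤ ∑ x ∈ U, c * 1 :=
        Finset.sum_le_sum fun x hxU => mul_le_mul_of_nonneg_left (hd x hxU) hc0
      _ = (U.card : ℝ) * c := by rw [Finset.sum_const, nsmul_eq_mul, mul_one]
      _ = 1 := by rw [hc, mul_one_div, div_self (ne_of_gt hUc)]

lemma sum_ite_pair (a b : Finset α) (m : ℝ) :
    ∀ x : Finset α, (∑ y : Finset α, if x = a ∧ y = b then m else 0)
      = if x = a then m else 0 := by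
  intro x
  by_cases h : x = a
  · simp [h, Finset.sum_ite_eq']
  · simp [h]

lemma sum_ite_pair' (a b : Finset α) (m : ℝ) :
    ∀ y : Finset α, (∑ x : Finset α, if x = a ∧ y = b then m else 0)
      = if y = b then m else 0 := by
  intro y
  by_cases h : y = b
  · simp [h, Finset.sum_ite_eq']
  · simp [h]

lemma cost_ite_pair (a b : Finset α) (m : ℝ) (hm : 0 ≤ m) :
    cost (fun x y : Finset α => if x = a ∧ y = b then m else 0) = m * dist a b := by
  unfold cost
  have hx : ∀ x : Finset α, (∑ y : Finset α, (if x = a ∧ y = b then m else 0) * dist x y)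
      = if x = a then m * dist a b else 0 := by
    intro x
    by_cases h : x = a
    · subst h; simp [ite_mul, Finset.sum_ite_eq']
    · simp [h]
  simp_rw [hx]
  simp [Finset.sum_ite_eq']

lemma twoPoint {U V : Finset (Finset α)} {S T J : Finset α}
    (hSU : S ∈ U) (hTV : T ∈ V) (hJU : J ∈ U) (hJV : J ∈ V) (hSJ : S ≠ J) (hTJ : T ≠ J)
    (hd2 : ∀ x ∈ U, ∀ y ∈ V, dist x y ≤ 2) (hdST : dist S T ≤ 1) :
    ∃ π, IsCoupling (unif U) (unif V) π ∧
      cost π ≤ 2 - 3 / ((max U.card V.card : ℕ) : ℝ) := by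
  have hp2 : 2 ≤ U.card := Finset.one_lt_card.2 ⟨S, hSU, J, hJU, hSJ⟩
  have hq2 : 2 ≤ V.card := Finset.one_lt_card.2 ⟨T, hTV, J, hJV, hTJ⟩
  set mx : ℝ := ((max U.card V.card : ℕ) : ℝ) with hmx
  have hmx2 : (2:ℝ) ≤ mx := by
    rw [hmx]; exact_mod_cast le_trans hp2 (le_max_left _ _)
  have hmxpos : (0:ℝ) < mx := lt_of_lt_of_le two_pos hmx2
  set m : ℝ := 1 / mx with hm
  have hm0 : 0 ≤ m := by positivity
  have hpc : (0:ℝ) < (U.card : ℝ) := by positivity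
  have hqc : (0:ℝ) < (V.card : ℝ) := by positivity
  have hmp : m ≤ 1 / (U.card : ℝ) := by
    apply one_div_le_one_div_of_le hpc
    rw [hmx]; exact_mod_cast le_max_left _ _
  have hmq : m ≤ 1 / (V.card : ℝ) := by
    apply one_div_le_one_div_of_le hqc
    rw [hmx]; exact_mod_cast le_max_right _ _
  set r : Finset α → ℝ :=
    fun x => unif U x - (if x = S then m else 0) - (if x = J then m else 0) with hr
  set s : Finset α → ℝ :=
    fun y => unif V y - (if y = T then m else 0) - (if y = J then m else 0) with hs
  have hrU : ∀ x, x ∉ U → r x = 0 := by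
    intro x hx
    have h1 : x ≠ S := fun h => hx (h ▸ hSU)
    have h2 : x ≠ J := fun h => hx (h ▸ hJU)
    simp [hr, unif, hx, h1, h2]
  have hsV : ∀ y, y ∉ V → s y = 0 := by
    intro y hy
    have h1 : y ≠ T := fun h => hy (h ▸ hTV)
    have h2 : y ≠ J := fun h => hy (h ▸ hJV)
    simp [hs, unif, hy, h1, h2]
  have hrnn : ∀ x, 0 ≤ r x := by
    intro x
    simp only [hr]
    by_cases h1 : x = S
    · have h2 : x ≠ J := fun h => hSJ (h1 ▸ h)
      rw [if_pos h1, if_neg h2, h1]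
      simp only [unif, if_pos hSU]
      linarith
    · by_cases h2 : x = J
      · rw [if_neg h1, if_pos h2, h2]
        simp only [unif, if_pos hJU]
        linarith
      · rw [if_neg h1, if_neg h2]
        simp only [unif]
        split_ifs with h
        · rw [sub_zero, sub_zero]
          positivity
        · simp
  have hsnn : ∀ y, 0 ≤ s y := by
    intro y
    simp only [hs]
    by_cases h1 : y = T
    · have h2 : y ≠ J := fun h => hTJ (h1 ▸ h)
      rw [if_pos h1, if_neg h2, h1]
      simp only [unif, if_pos hTV]
      linarith
    · by_cases h2 : y = J
      · rw [if_neg h1, if_pos h2, h2]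
        simp only [unif, if_pos hJV]
        linarith
      · rw [if_neg h1, if_neg h2]
        simp only [unif]
        split_ifs with h
        · rw [sub_zero, sub_zero]
          positivity
        · simp
  have hrsum : ∑ x : Finset α, r x = 1 - 2*m := by
    simp only [hr]
    rw [Finset.sum_sub_distrib, Finset.sum_sub_distrib, unif_sum U ⟨S, hSU⟩]
    simp [Finset.sum_ite_eq']
    ring
  have hssum : ∑ y : Finset α, s y = 1 - 2*m := by
    simp only [hs]
    rw [Finset.sum_sub_distrib, Finset.sum_sub_distrib, unif_sum V ⟨T, hTV⟩]
    simp [Finset.sum_ite_eq']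
    ring
  set Rm : ℝ := 1 - 2*m with hRm
  have hRmnn : 0 ≤ Rm := by
    have : m ≤ 1/2 := by
      rw [hm]
      apply one_div_le_one_div_of_le two_pos hmx2
    rw [hRm]; linarith
  set π : Finset α → Finset α → ℝ := fun x y =>
    (if x = S ∧ y = T then m else 0) + (if x = J ∧ y = J then m else 0)
      + (if Rm = 0 then 0 else r x * s y / Rm) with hπ
  have hπnn : ∀ x y, 0 ≤ π x y := by
    intro x y
    simp only [hπ]
    have h3 : 0 ≤ (if Rm = 0 then 0 else r x * s y / Rm) := by
      split_ifs with h
      · exact le_rfl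
      · exact div_nonneg (mul_nonneg (hrnn x) (hsnn y)) hRmnn
    have h1 : 0 ≤ (if x = S ∧ y = T then m else 0) := by
      split_ifs
      · exact hm0
      · exact le_rfl
    have h2 : 0 ≤ (if x = J ∧ y = J then m else 0) := by
      split_ifs
      · exact hm0
      · exact le_rfl
    linarith
  have hrzero : Rm = 0 → ∀ x, r x = 0 := by
    intro h x
    have := (Finset.sum_eq_zero_iff_of_nonneg (fun x _ => hrnn x)).1 (by rw [hrsum, h])
    exact this x (Finset.mem_univ x)
  have hszero : Rm = 0 → ∀ y, s y = 0 := by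
    intro h y
    have := (Finset.sum_eq_zero_iff_of_nonneg (fun y _ => hsnn y)).1 (by rw [hssum, h])
    exact this y (Finset.mem_univ y)
  refine ⟨π, ⟨hπnn, ?_, ?_⟩, ?_⟩
  · intro x
    simp only [hπ]
    rw [Finset.sum_add_distrib, Finset.sum_add_distrib, sum_ite_pair, sum_ite_pair]
    have h3 : (∑ y : Finset α, if Rm = 0 then 0 else r x * s y / Rm) = r x := by
      by_cases h : Rm = 0
      · simp [h, hrzero h x]
      · simp only [if_neg h]
        rw [← Finset.sum_div, ← Finset.mul_sum, hssum, mul_div_assoc, div_self h,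
          mul_one]
    rw [h3]
    simp only [hr]
    ring
  · intro y
    simp only [hπ]
    rw [Finset.sum_add_distrib, Finset.sum_add_distrib, sum_ite_pair', sum_ite_pair']
    have h3 : (∑ x : Finset α, if Rm = 0 then 0 else r x * s y / Rm) = s y := by
      by_cases h : Rm = 0
      · simp [h, hszero h y]
      · simp only [if_neg h]
        rw [← Finset.sum_div, ← Finset.sum_mul, hrsum, mul_comm, mul_div_assoc,
          div_self h, mul_one]
    rw [h3]
    simp only [hs]
    ring
  · -- cost bound
    have hsplit : cost π = cost (fun x y : Finset α => if x = S ∧ y = T then m else 0)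
        + cost (fun x y : Finset α => if x = J ∧ y = J then m else 0)
        + cost (fun x y : Finset α => if Rm = 0 then 0 else r x * s y / Rm) := by
      unfold cost
      simp_rw [hπ, add_mul, Finset.sum_add_distrib]
    have hC3 : cost (fun x y : Finset α => if Rm = 0 then 0 else r x * s y / Rm)
        ≤ 2 * Rm := by
      by_cases h : Rm = 0
      · rw [h]
        simp [cost, h]
      · unfold cost
        simp only [if_neg h]
        calc ∑ x : Finset α, ∑ y : Finset α, r x * s y / Rm * dist x y
            ≤ ∑ x : Finset α, ∑ y : Finset α, r x * s y / Rm * 2 := by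
              refine Finset.sum_le_sum fun x _ => Finset.sum_le_sum fun y _ => ?_
              by_cases hx : x ∈ U
              · by_cases hy : y ∈ V
                · exact mul_le_mul_of_nonneg_left (hd2 x hx y hy)
                    (div_nonneg (mul_nonneg (hrnn x) (hsnn y)) hRmnn)
                · rw [hsV y hy]; simp
              · rw [hrU x hx]; simp
          _ = 2 * Rm := by
              have hterm : ∀ x y : Finset α, r x * s y / Rm * 2 = (2/Rm * r x) * s y :=
                fun x y => by ring
              simp_rw [hterm]
              rw [← Finset.sum_mul_sum, ← Finset.mul_sum, hrsum, hssum]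
              field_simp
    rw [hsplit, cost_ite_pair _ _ _ hm0, cost_ite_pair _ _ _ hm0, dist_self', mul_zero]
    have h3mx : (3:ℝ)/mx = 3*m := by rw [hm]; ring
    have hST : m * dist S T ≤ m * 1 := mul_le_mul_of_nonneg_left hdST hm0
    rw [← hmx, h3mx, hRm] at *
    linarith

lemma mem_up {S B : Finset α} {u : α} :
    B ∈ M.up S u ↔ M.IsBase B ∧ S.erase u ⊆ B := by simp [up]

lemma base_card_eq (B₁ B₂ : Finset α) (h1 : M.IsBase B₁) (h2 : M.IsBase B₂) :
    B₁.card = B₂.card := by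
  generalize hn : (B₁ \ B₂).card = d
  induction d using Nat.strong_induction_on generalizing B₁ with
  | _ d ih =>
    rcases Finset.eq_empty_or_nonempty (B₁ \ B₂) with he | ⟨b₁, hb₁⟩
    · have hsub : B₁ ⊆ B₂ := by
        intro x hx
        by_contra hx2
        exact Finset.notMem_empty x (he ▸ Finset.mem_sdiff.2 ⟨hx, hx2⟩)
      rw [M.antichain B₁ B₂ h1 h2 hsub]
    · obtain ⟨b₂, hb₂, hbase⟩ := M.exchange B₁ B₂ h1 h2 b₁ hb₁
      obtain ⟨hb₁1, hb₁2⟩ := Finset.mem_sdiff.1 hb₁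
      obtain ⟨hb₂1, hb₂2⟩ := Finset.mem_sdiff.1 hb₂
      set B' := insert b₂ (B₁.erase b₁) with hB'
      have hb₂e : b₂ ∉ B₁.erase b₁ := fun h => hb₂2 (Finset.mem_of_mem_erase h)
      have hcard : B'.card = B₁.card := by
        rw [hB', Finset.card_insert_of_notMem hb₂e, Finset.card_erase_of_mem hb₁1]
        have : 1 ≤ B₁.card := Finset.card_pos.2 ⟨b₁, hb₁1⟩
        omega
      have hdiff : B' \ B₂ = (B₁ \ B₂).erase b₁ := by
        ext x
        simp only [hB', Finset.mem_sdiff, Finset.mem_insert, Finset.mem_erase]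
        constructor
        · rintro ⟨h | ⟨hx1, hx2⟩, hx3⟩
          · exact absurd (h ▸ hb₂1) hx3
          · exact ⟨hx1, hx2, hx3⟩
        · rintro ⟨hx1, hx2, hx3⟩
          exact ⟨Or.inr ⟨hx1, hx2⟩, hx3⟩
      have hlt : (B' \ B₂).card < d := by
        rw [hdiff, Finset.card_erase_of_mem hb₁, ← hn]
        have : 1 ≤ (B₁ \ B₂).card := Finset.card_pos.2 ⟨b₁, hb₁⟩
        omega
      have := ih _ hlt B' hbase rfl
      omega

lemma self_mem_up {S : Finset α} (hS : M.IsBase S) (u : α) : S ∈ M.up S u :=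
  M.mem_up.2 ⟨hS, Finset.erase_subset _ _⟩

lemma up_shape {S B : Finset α} {u : α} (hS : M.IsBase S) (hu : u ∈ S)
    (hB : B ∈ M.up S u) : ∃ x, x ∉ S.erase u ∧ B = insert x (S.erase u) := by
  obtain ⟨hB1, hB2⟩ := M.mem_up.1 hB
  have hcards : B.card = S.card := M.base_card_eq B S hB1 hS
  have h1 : (B \ S.erase u).card = 1 := by
    rw [Finset.card_sdiff_of_subset hB2, hcards, Finset.card_erase_of_mem hu]
    have : 1 ≤ S.card := Finset.card_pos.2 ⟨u, hu⟩
    omega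
  obtain ⟨x, hx⟩ := Finset.card_eq_one.1 h1
  refine ⟨x, ?_, ?_⟩
  · have : x ∈ B \ S.erase u := hx ▸ Finset.mem_singleton_self x
    exact (Finset.mem_sdiff.1 this).2
  · rw [← Finset.sdiff_union_of_subset hB2, hx]
    ext y
    simp [Finset.mem_insert, or_comm]

lemma up_card_le {S : Finset α} {u : α} (hS : M.IsBase S) (hu : u ∈ S) :
    (M.up S u).card + S.card ≤ Fintype.card α + 1 := by
  have hsub : M.up S u ⊆ (Finset.univ \ S.erase u).image
      (fun x => insert x (S.erase u)) := by
    intro B hB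
    obtain ⟨x, hx1, hx2⟩ := M.up_shape hS hu hB
    exact Finset.mem_image.2 ⟨x, Finset.mem_sdiff.2 ⟨Finset.mem_univ x, hx1⟩, hx2.symm⟩
  have h1 := (Finset.card_le_card hsub).trans (Finset.card_image_le)
  rw [Finset.card_sdiff_of_subset (Finset.subset_univ _), Finset.card_univ,
    Finset.card_erase_of_mem hu] at h1
  have h2 : S.card ≤ Fintype.card α := Finset.card_le_card (Finset.subset_univ S)
  have h3 : 1 ≤ S.card := Finset.card_pos.2 ⟨u, hu⟩
  omega

lemma sdiff_adjacent {S : Finset α} {i j : α} (hi : i ∈ S) (hj : j ∉ S) :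
    S \ insert j (S.erase i) = {i} := by
  ext x
  simp only [Finset.mem_sdiff, Finset.mem_insert, Finset.mem_erase, Finset.mem_singleton]
  constructor
  · rintro ⟨hxS, hx⟩
    push_neg at hx
    exact not_not.1 (fun hxi => hx.2 hxi hxS)
  · rintro rfl
    refine ⟨hi, ?_⟩
    push_neg
    exact ⟨fun h => hj (h ▸ hi), fun h => absurd rfl h⟩

lemma per_u_coupling (hn : Fintype.card α ≤ 7) {S T : Finset α}
    (hS : M.IsBase S) (hT : M.IsBase T) {i j : α}
    (hi : i ∈ S) (hj : j ∉ S) (hTd : T = insert j (S.erase i))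
    {u : α} (huS : u ∈ S) (hui : u ≠ i) :
    ∃ π, IsCoupling (unif (M.up S u)) (unif (M.up T u)) π ∧
      cost π ≤ (S.card : ℝ) / ((S.card : ℝ) - 1) := by
  have hij : i ≠ j := fun h => hj (h ▸ hi)
  have hju : j ≠ u := fun h => hj (h ▸ huS)
  have hiu : i ≠ u := fun h => hui h.symm
  have hjSe : j ∉ S.erase i := fun h => hj (Finset.mem_of_mem_erase h)
  have hjT : j ∈ T := hTd ▸ Finset.mem_insert_self j _
  have huT : u ∈ T := by
    rw [hTd]
    exact Finset.mem_insert_of_mem (Finset.mem_erase.2 ⟨hui, huS⟩)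
  have hiT : i ∉ T := by
    rw [hTd]
    simp [hij, Finset.mem_erase]
  have hcardT : T.card = S.card := by
    rw [hTd, Finset.card_insert_of_notMem hjSe, Finset.card_erase_of_mem hi]
    have : 1 ≤ S.card := Finset.card_pos.2 ⟨i, hi⟩
    omega
  have hk2 : 2 ≤ S.card := Finset.one_lt_card.2 ⟨i, hi, u, huS, hiu⟩
  set E : Finset α := (S.erase u).erase i with hE
  have hiSu : i ∈ S.erase u := Finset.mem_erase.2 ⟨hiu, hi⟩
  have hSu : S.erase u = insert i E := (Finset.insert_erase hiSu).symm
  have hTu : T.erase u = insert j E := by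
    rw [hTd, Finset.erase_insert_of_ne hju, Finset.erase_right_comm]
  have hiE : i ∉ E := Finset.notMem_erase i _
  have huE : u ∉ E := fun h => Finset.notMem_erase u _ (Finset.mem_of_mem_erase h)
  have hjE : j ∉ E := fun h => hj (Finset.mem_of_mem_erase (Finset.mem_of_mem_erase h))
  have hES : E ⊆ S := fun x h => Finset.mem_of_mem_erase (Finset.mem_of_mem_erase h)
  have hcardE : E.card = S.card - 2 := by
    rw [hE, Finset.card_erase_of_mem hiSu, Finset.card_erase_of_mem huS]
    omega
  have hSmem : S ∈ M.up S u := M.self_mem_up hS u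
  have hTmem : T ∈ M.up T u := M.self_mem_up hT u
  -- shapes
  have hshapeS : ∀ B ∈ M.up S u, ∃ x, x ∉ insert i E ∧ B = insert x (insert i E) := by
    intro B hB
    obtain ⟨x, hx1, hx2⟩ := M.up_shape hS huS hB
    rw [hSu] at hx1 hx2
    exact ⟨x, hx1, hx2⟩
  have hshapeT : ∀ C ∈ M.up T u, ∃ y, y ∉ insert j E ∧ C = insert y (insert j E) := by
    intro C hC
    obtain ⟨y, hy1, hy2⟩ := M.up_shape hT huT hC
    rw [hTu] at hy1 hy2
    exact ⟨y, hy1, hy2⟩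
  have hSform : S = insert u (insert i E) := by rw [← hSu, Finset.insert_erase huS]
  have hTform : T = insert u (insert j E) := by rw [← hTu, Finset.insert_erase huT]
  by_cases hδ : M.IsBase (insert j (insert i E))
  · -- two-point coupling case
    set J : Finset α := insert j (insert i E) with hJ
    have hJU : J ∈ M.up S u := M.mem_up.2 ⟨hδ, by rw [hSu]; exact Finset.subset_insert _ _⟩
    have hJV : J ∈ M.up T u := M.mem_up.2 ⟨hδ, by
      rw [hTu, hJ, Finset.insert_comm]
      exact Finset.subset_insert _ _⟩
    have huJ : u ∉ J := by
      rw [hJ]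
      simp only [Finset.mem_insert]
      push_neg
      exact ⟨hju.symm, hiu.symm, huE⟩
    have hSJ : S ≠ J := fun h => huJ (h ▸ huS)
    have hTJ : T ≠ J := fun h => huJ (h ▸ huT)
    have hd2 : ∀ B ∈ M.up S u, ∀ C ∈ M.up T u, dist B C ≤ 2 := by
      intro B hB C hC
      have hEB : E ⊆ B := by
        have := (M.mem_up.1 hB).2
        rw [hSu] at this
        exact (Finset.subset_insert _ _).trans this
      have hEC : E ⊆ C := by
        have := (M.mem_up.1 hC).2
        rw [hTu] at this
        exact (Finset.subset_insert _ _).trans this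
      have hsub : B \ C ⊆ B \ E := Finset.sdiff_subset_sdiff (le_refl _) hEC
      have hcardB : B.card = S.card := M.base_card_eq B S (M.mem_up.1 hB).1 hS
      have h1 : (B \ E).card = 2 := by
        rw [Finset.card_sdiff_of_subset hEB, hcardB, hcardE]
        omega
      have := Finset.card_le_card hsub
      unfold dist
      rw [h1] at this
      exact_mod_cast this
    have hdST : dist S T ≤ 1 := by
      unfold dist
      rw [hTd, sdiff_adjacent hi hj]
      simp
    obtain ⟨π, hπ, hcost⟩ := twoPoint hSmem hTmem hJU hJV hSJ hTJ hd2 hdST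
    refine ⟨π, hπ, hcost.trans ?_⟩
    -- arithmetic
    set p := (M.up S u).card
    set q := (M.up T u).card
    have hp8 : p + S.card ≤ 8 := le_trans (M.up_card_le hS huS) (by omega)
    have hq8 : q + S.card ≤ 8 := by
      have := M.up_card_le hT huT
      rw [hcardT] at this
      exact le_trans this (by omega)
    have hmax8 : max p q + S.card ≤ 8 := by
      rcases max_choice p q with h | h <;> rw [h] <;> omega
    have hp2 : 2 ≤ p := Finset.one_lt_card.2 ⟨S, hSmem, J, hJU, hSJ⟩
    have hmax2 : (2:ℝ) ≤ ((max p q : ℕ) : ℝ) := by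
      exact_mod_cast le_trans hp2 (le_max_left _ _)
    have hmaxk : ((max p q : ℕ) : ℝ) + (S.card : ℝ) ≤ 8 := by exact_mod_cast hmax8
    set mx : ℝ := ((max p q : ℕ) : ℝ)
    set k : ℝ := (S.card : ℝ) with hk
    have hk2' : (2:ℝ) ≤ k := by rw [hk]; exact_mod_cast hk2
    have hmxpos : (0:ℝ) < mx := lt_of_lt_of_le two_pos hmax2
    have h8k : (0:ℝ) < 8 - k := by linarith
    have h3 : 3 / (8 - k) ≤ 3 / mx := by
      apply div_le_div_of_nonneg_left (by norm_num) hmxpos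
      linarith
    have hne1 : k - 1 ≠ 0 := by linarith
    have hne2 : (8:ℝ) - k ≠ 0 := ne_of_gt h8k
    have expand : k / (k - 1) - (2 - 3 / (8 - k))
        = (k^2 - 7*k + 13) / ((k - 1) * (8 - k)) := by
      field_simp
      ring
    have hnum : (0:ℝ) ≤ k^2 - 7*k + 13 := by nlinarith [sq_nonneg (k - 7/2)]
    have hden : (0:ℝ) < (k - 1) * (8 - k) := mul_pos (by linarith) h8k
    have hfinal : 0 ≤ k / (k - 1) - (2 - 3 / (8 - k)) :=
      expand ▸ div_nonneg hnum hden.le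
    linarith
  · -- bijection coupling case
    have hjB : ∀ B ∈ M.up S u, j ∉ B := by
      intro B hB hjB
      obtain ⟨x, hx1, hx2⟩ := hshapeS B hB
      have : j = x := by
        rcases Finset.mem_insert.1 (hx2 ▸ hjB) with h | h
        · exact h
        · rcases Finset.mem_insert.1 h with h' | h'
          · exact absurd h'.symm hij
          · exact absurd h' hjE
      exact hδ (by rw [← this] at hx2; rw [← hx2]; exact (M.mem_up.1 hB).1)
    have hiB : ∀ B ∈ M.up S u, i ∈ B := by
      intro B hB
      have := (M.mem_up.1 hB).2
      exact this hiSu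
    have hrecov : ∀ B ∈ M.up S u, insert i ((insert j (B.erase i)).erase j) = B := by
      intro B hB
      rw [Finset.erase_insert (fun h => hjB B hB (Finset.mem_of_mem_erase h)),
        Finset.insert_erase (hiB B hB)]
    have hfV : ∀ B ∈ M.up S u, insert j (B.erase i) ∈ M.up T u := by
      intro B hB
      obtain ⟨x, hx1, hx2⟩ := hshapeS B hB
      by_cases hxu : x = u
      · have hBS : B = S := by rw [hx2, hxu, ← hSform]
        rw [hBS, ← hTd]
        exact hTmem
      · have hxi : x ≠ i := fun h => hx1 (h ▸ Finset.mem_insert_self i E)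
        have hxE : x ∉ E := fun h => hx1 (Finset.mem_insert_of_mem h)
        have hxj : x ≠ j := by
          intro h
          apply hδ
          rw [h] at hx2
          rw [← hx2]
          exact (M.mem_up.1 hB).1
        have huB : u ∉ B := by
          rw [hx2]
          simp only [Finset.mem_insert]
          push_neg
          exact ⟨fun h => hxu h.symm, hui, huE⟩
        obtain ⟨b, hb, hbase⟩ := M.exchange T B hT (M.mem_up.1 hB).1 u
          (Finset.mem_sdiff.2 ⟨huT, huB⟩)
        obtain ⟨hbB, hbT⟩ := Finset.mem_sdiff.1 hb
        have hbval : b = x := by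
          rcases Finset.mem_insert.1 (hx2 ▸ hbB) with h | h
          · exact h
          rcases Finset.mem_insert.1 h with h' | h'
          · exfalso
            apply hδ
            rw [h', hTu, Finset.insert_comm] at hbase
            exact hbase
          · exfalso
            exact hbT ((Finset.erase_subset u T) (hTu ▸ Finset.mem_insert_of_mem h'))
        have hBei : B.erase i = insert x E := by
          rw [hx2, Finset.erase_insert_of_ne hxi, Finset.erase_insert hiE]
        have heq2 : insert j (B.erase i) = insert x (T.erase u) := by
          rw [hBei, hTu, Finset.insert_comm]
        rw [heq2]
        rw [hbval] at hbase
        exact M.mem_up.2 ⟨hbase, Finset.subset_insert _ _⟩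
    have hinj : ∀ B₁ ∈ M.up S u, ∀ B₂ ∈ M.up S u,
        insert j (B₁.erase i) = insert j (B₂.erase i) → B₁ = B₂ := by
      intro B₁ h1 B₂ h2 heq
      rw [← hrecov B₁ h1, heq, hrecov B₂ h2]
    have hsurj : ∀ C ∈ M.up T u, ∃ B ∈ M.up S u, insert j (B.erase i) = C := by
      intro C hC
      obtain ⟨y, hy1, hy2⟩ := hshapeT C hC
      by_cases hyu : y = u
      · refine ⟨S, hSmem, ?_⟩
        rw [← hTd, hy2, hyu, ← hTform]
      · have hyj : y ≠ j := fun h => hy1 (h ▸ Finset.mem_insert_self j E)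
        have hyE : y ∉ E := fun h => hy1 (Finset.mem_insert_of_mem h)
        have hyi : y ≠ i := by
          intro h
          apply hδ
          have hC' := (M.mem_up.1 hC).1
          rw [hy2, h, Finset.insert_comm] at hC'
          exact hC'
        have huC : u ∉ C := by
          rw [hy2]
          simp only [Finset.mem_insert]
          push_neg
          exact ⟨fun h => hyu h.symm, fun h => hju h.symm, huE⟩
        obtain ⟨b, hb, hbase⟩ := M.exchange S C hS (M.mem_up.1 hC).1 u
          (Finset.mem_sdiff.2 ⟨huS, huC⟩)
        obtain ⟨hbC, hbS⟩ := Finset.mem_sdiff.1 hb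
        have hbval : b = y := by
          rcases Finset.mem_insert.1 (hy2 ▸ hbC) with h | h
          · exact h
          rcases Finset.mem_insert.1 h with h' | h'
          · exfalso
            apply hδ
            rw [h', hSu] at hbase
            exact hbase
          · exact absurd (hES h') hbS
        rw [hbval] at hbase
        refine ⟨insert y (S.erase u), M.mem_up.2 ⟨hbase, Finset.subset_insert _ _⟩, ?_⟩
        have herase : (insert y (S.erase u)).erase i = insert y E := by
          rw [hSu, Finset.erase_insert_of_ne hyi, Finset.erase_insert hiE]
        rw [herase, Finset.insert_comm, ← hy2]
    have hd1 : ∀ B ∈ M.up S u, dist B (insert j (B.erase i)) ≤ 1 := by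
      intro B hB
      have hsub : B \ insert j (B.erase i) ⊆ {i} := by
        intro x hx
        obtain ⟨hx1, hx2⟩ := Finset.mem_sdiff.1 hx
        simp only [Finset.mem_insert, Finset.mem_erase] at hx2
        push_neg at hx2
        exact Finset.mem_singleton.2 (not_not.1 fun h => hx2.2 h hx1)
      have hcard := Finset.card_le_card hsub
      rw [Finset.card_singleton] at hcard
      unfold dist
      exact_mod_cast hcard
    obtain ⟨π, hπ, hcost⟩ := unifBij ⟨S, hSmem⟩ (fun B => insert j (B.erase i))
      hfV hinj hsurj hd1
    refine ⟨π, hπ, hcost.trans ?_⟩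
    have hk2' : (2:ℝ) ≤ (S.card : ℝ) := by exact_mod_cast hk2
    have hpos : (0:ℝ) < (S.card : ℝ) - 1 := by linarith
    rw [le_div_iff₀ hpos]
    linarith

lemma adjacent_coupling (hn : Fintype.card α ≤ 7) {S T : Finset α}
    (hS : M.IsBase S) (hT : M.IsBase T) {i j : α}
    (hi : i ∈ S) (hj : j ∉ S) (hTd : T = insert j (S.erase i)) :
    ∃ π, IsCoupling (M.step S) (M.step T) π ∧ cost π ≤ 1 := by
  have hij : i ≠ j := fun h => hj (h ▸ hi)
  have hjSe : j ∉ S.erase i := fun h => hj (Finset.mem_of_mem_erase h)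
  have hk1 : 1 ≤ S.card := Finset.card_pos.2 ⟨i, hi⟩
  have hcardT : T.card = S.card := by
    rw [hTd, Finset.card_insert_of_notMem hjSe, Finset.card_erase_of_mem hi]
    omega
  have hupeq : M.up T j = M.up S i := by
    unfold up
    rw [hTd, Finset.erase_insert hjSe]
  have key : ∀ u : α, ∃ πu : Finset α → Finset α → ℝ,
      u ∈ S → (IsCoupling (unif (M.up S u)) (unif (M.up T (if u = i then j else u))) πu ∧
        cost πu ≤ if u = i then 0 else (S.card : ℝ) / ((S.card : ℝ) - 1)) := by
    intro u
    by_cases hui : u = i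
    · obtain ⟨hcpl, hcost⟩ := diag_coupling (unif (M.up S i)) (unif_nonneg _)
      refine ⟨fun x y => if x = y then unif (M.up S i) x else 0, fun _ => ⟨?_, ?_⟩⟩
      · rw [if_pos hui, hupeq, hui]
        exact hcpl
      · rw [if_pos hui]
        exact le_of_eq hcost
    · by_cases huS : u ∈ S
      · obtain ⟨πu, h1, h2⟩ := M.per_u_coupling hn hS hT hi hj hTd huS hui
        refine ⟨πu, fun _ => ⟨?_, ?_⟩⟩
        · rw [if_neg hui]
          exact h1
        · rw [if_neg hui]
          exact h2
      · exact ⟨fun _ _ => 0, fun h => absurd h huS⟩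
  choose πc hπc using key
  obtain ⟨hcpl, hcosteq⟩ := mix_coupling S (fun _ => 1 / (S.card : ℝ))
    (fun u => by positivity)
    (fun u => unif (M.up S u)) (fun u => unif (M.up T (if u = i then j else u))) πc
    (fun u hu => (hπc u hu).1)
  have hμ : (fun B => ∑ u ∈ S, (1 / (S.card : ℝ)) * unif (M.up S u) B) = M.step S := rfl
  have hν : (fun B => ∑ u ∈ S,
      (1 / (S.card : ℝ)) * unif (M.up T (if u = i then j else u)) B) = M.step T := by
    funext B
    unfold step
    rw [hcardT]
    refine Finset.sum_nbij' (fun u => if u = i then j else u) (fun v => if v = j then i else v)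
      ?_ ?_ ?_ ?_ ?_
    · intro u hu
      by_cases h : u = i
      · rw [if_pos h, hTd]
        exact Finset.mem_insert_self j _
      · rw [if_neg h, hTd]
        exact Finset.mem_insert_of_mem (Finset.mem_erase.2 ⟨h, hu⟩)
    · intro v hv
      by_cases h : v = j
      · rw [if_pos h]; exact hi
      · rw [if_neg h]
        rw [hTd] at hv
        rcases Finset.mem_insert.1 hv with h' | h'
        · exact absurd h' h
        · exact Finset.mem_of_mem_erase h'
    · intro u hu
      by_cases h : u = i
      · rw [if_pos h, if_pos rfl, h]
      · have huj : u ≠ j := fun he => hj (he ▸ hu)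
        rw [if_neg h, if_neg huj]
    · intro v hv
      by_cases h : v = j
      · rw [if_pos h, if_pos rfl, h]
      · rw [if_neg h, if_neg]
        intro he
        rw [hTd, he] at hv
        rcases Finset.mem_insert.1 hv with h' | h'
        · exact hij h'
        · exact (Finset.notMem_erase i _) h'
    · intro u hu
      rfl
  rw [hμ, hν] at hcpl
  refine ⟨_, hcpl, ?_⟩
  rw [hcosteq]
  have hbnd : ∑ u ∈ S, (1 / (S.card : ℝ)) * cost (πc u)
      ≤ ∑ u ∈ S, (1 / (S.card : ℝ)) * (if u = i then 0 else (S.card : ℝ) / ((S.card : ℝ) - 1)) := by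
    refine Finset.sum_le_sum fun u hu => mul_le_mul_of_nonneg_left ((hπc u hu).2) (by positivity)
  refine hbnd.trans ?_
  rw [← Finset.sum_erase_add _ _ hi, if_pos rfl, mul_zero, add_zero]
  set k : ℝ := (S.card : ℝ) with hk
  have hknn : (0:ℝ) ≤ k := by rw [hk]; positivity
  have hterm : ∀ u ∈ S.erase i,
      (1 / k) * (if u = i then 0 else k / (k - 1)) ≤ (1 / k) * (k / (k - 1)) := by
    intro u hu
    rw [if_neg (Finset.ne_of_mem_erase hu)]
  refine le_trans (Finset.sum_le_sum hterm) ?_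
  rw [Finset.sum_const, Finset.card_erase_of_mem hi, nsmul_eq_mul]
  by_cases hk2 : 2 ≤ S.card
  · have h1 : ((S.card - 1 : ℕ) : ℝ) = k - 1 := by
      rw [hk]
      have : (1:ℕ) ≤ S.card := hk1
      push_cast [this]
      ring
    rw [h1]
    have h2 : k ≠ 0 := by rw [hk]; positivity
    have h3 : k - 1 ≠ 0 := by
      have : (2:ℝ) ≤ k := by rw [hk]; exact_mod_cast hk2
      intro h
      linarith
    have : (k - 1) * (1 / k * (k / (k - 1))) = 1 := by field_simp
    rw [this]
  · have hk1' : S.card = 1 := by omega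
    have hkval : k = 1 := by rw [hk, hk1']; norm_num
    rw [hk1', hkval]
    norm_num

lemma step_nonneg (S : Finset α) : ∀ B, 0 ≤ M.step S B := by
  intro B
  unfold step
  refine Finset.sum_nonneg fun u _ => mul_nonneg (by positivity) ?_
  split_ifs <;> positivity

lemma coupling_exists (hn : Fintype.card α ≤ 7) (d : ℕ) :
    ∀ S T, M.IsBase S → M.IsBase T → (S \ T).card = d →
    ∃ π, IsCoupling (M.step S) (M.step T) π ∧ cost π ≤ (d : ℝ) := by
  induction d using Nat.strong_induction_on with
  | _ d ih =>
    intro S T hS hT hd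
    rcases Nat.eq_zero_or_pos d with h0 | hpos
    · have hsub : S ⊆ T := by
        rw [← Finset.sdiff_eq_empty_iff_subset]
        exact Finset.card_eq_zero.1 (h0 ▸ hd)
      have hST : S = T := M.antichain S T hS hT hsub
      obtain ⟨hcpl, hcost⟩ := diag_coupling (M.step S) (M.step_nonneg S)
      subst hST
      refine ⟨_, hcpl, ?_⟩
      rw [hcost, h0]
      norm_num
    · have hne : (S \ T).Nonempty := Finset.card_pos.1 (hd ▸ hpos)
      obtain ⟨i, hiST⟩ := hne
      obtain ⟨j, hjTS, hbase⟩ := M.exchange S T hS hT i hiST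
      obtain ⟨hiS, hiT⟩ := Finset.mem_sdiff.1 hiST
      obtain ⟨hjT, hjS⟩ := Finset.mem_sdiff.1 hjTS
      have hd' : (insert j (S.erase i) \ T).card = d - 1 := by
        have hset : insert j (S.erase i) \ T = (S \ T).erase i := by
          ext x
          simp only [Finset.mem_sdiff, Finset.mem_insert, Finset.mem_erase]
          constructor
          · rintro ⟨h | ⟨hxi, hxS⟩, hxT⟩
            · exact absurd (h ▸ hjT) hxT
            · exact ⟨hxi, hxS, hxT⟩
          · rintro ⟨hxi, hxS, hxT⟩
            exact ⟨Or.inr ⟨hxi, hxS⟩, hxT⟩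
        rw [hset, Finset.card_erase_of_mem hiST, hd]
      obtain ⟨π₂, hπ₂, hc₂⟩ := ih (d-1) (by omega) _ T hbase hT hd'
      obtain ⟨π₁, hπ₁, hc₁⟩ := M.adjacent_coupling hn hS hbase hiS hjS rfl
      obtain ⟨π, hπ, hc⟩ := glue_coupling hπ₁ hπ₂
      refine ⟨π, hπ, hc.trans ?_⟩
      have hcast : ((d-1:ℕ):ℝ) = (d:ℝ) - 1 := by
        have : (1:ℕ) ≤ d := hpos
        push_cast [this]
        ring
      rw [hcast] at hc₂
      linarith

end FinMatroid


/-- Corollary: the basis exchange walk on any matroid with ground set of size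
at most 7 is non-negatively curved. -/
theorem stmt5 {α : Type*} [Fintype α] [DecidableEq α] (M : FinMatroid α)
    (hn : Fintype.card α ≤ 7) :
    0 ≤ M.curvature := by
  classical
  have h0 : (0:ℝ) ∈ {κ : ℝ | ∀ S T, M.IsBase S → M.IsBase T →
      FinMatroid.W (M.step S) (M.step T) ≤ (1 - κ) * FinMatroid.dist S T} := by
    intro S T hS hT
    obtain ⟨π, hπ, hc⟩ := M.coupling_exists hn (S \ T).card S T hS hT rfl
    have hbdd : BddBelow {c : ℝ | ∃ π, FinMatroid.IsCoupling (M.step S) (M.step T) π ∧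
        FinMatroid.cost π = c} := by
      refine ⟨0, ?_⟩
      rintro c ⟨π', hπ', rfl⟩
      exact FinMatroid.cost_nonneg hπ'.1
    have hW : FinMatroid.W (M.step S) (M.step T) ≤ FinMatroid.cost π :=
      csInf_le hbdd ⟨π, hπ, rfl⟩
    have : FinMatroid.W (M.step S) (M.step T) ≤ FinMatroid.dist S T :=
      hW.trans hc
    simpa using this
  unfold FinMatroid.curvature
  by_cases hb : BddAbove {κ : ℝ | ∀ S T, M.IsBase S → M.IsBase T →
      FinMatroid.W (M.step S) (M.step T) ≤ (1 - κ) * FinMatroid.dist S T}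
  · exact le_csSup hb h0
  · rw [Real.sSup_of_not_bddAbove hb]
end

section
/- Let S = {s, u_1, ..., u_{k-1}} and T = {t, u_1, ..., u_{k-1}} be adjacent bases of a matroid, u ∈ S ∩ T with t ∈ N(S-u), and let a ∈ A_u := (N(S-u) - t) \ N(T-u). Then the basis S - u + a is at distance at least 2 (in the basis-exchange metric) from every basis of the form T - v + b with v ∈ T, b ∈ N(T - v), except possibly T - u + s, T - t + s, and T - t + a. -/
/-! Since `a ∈ N(S - u)` is a proper exchange and `a ∉ N(T - u)`, `a` lies outside `T`, so
`S - u + a = U + s + a` has the two elements `s, a` outside `T`. A neighbour `T - v + b` adds only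
`b`, so it misses `s` or `a`; it misses both unless `b ∈ {s, a}`, and then the excluded bases and
`a ∉ N(T - u)` force `v ∈ U`, which is a second element of `S - u + a` it misses. -/

open scoped Classical BigOperators

namespace FinMatroid

variable {α : Type*} [Fintype α] [DecidableEq α] (M : FinMatroid α)

theorem mem_exNbr {B : Finset α} {u x : α} :
    x ∈ M.exNbr B u ↔ M.IsBase (insert x (B.erase u)) := by
  simp [exNbr]

theorem self_mem_exNbr {B : Finset α} {u : α} (hB : M.IsBase B) (hu : u ∈ B) :
    u ∈ M.exNbr B u := by
  rwa [mem_exNbr, Finset.insert_erase hu]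

/-- Otherwise `B - u + x` would be the proper subset `B - u` of the basis `B`. -/
theorem notMem_of_mem_exNbr {B : Finset α} {u x : α} (hB : M.IsBase B) (hu : u ∈ B)
    (hx : x ∈ M.exNbr B u) (hxu : x ≠ u) : x ∉ B := by
  intro hxB
  rw [mem_exNbr, Finset.insert_eq_of_mem (Finset.mem_erase.2 ⟨hxu, hxB⟩)] at hx
  have hBu : B.erase u = B := M.antichain _ _ hx hB (B.erase_subset u)
  rw [← hBu] at hu
  exact Finset.notMem_erase u B hu

end FinMatroid

theorem stmt12_general {α : Type*} [Fintype α] [DecidableEq α] (M : FinMatroid α)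
    (U : Finset α) (s t u : α)
    (hs : s ∉ U) (hu : u ∉ U)
    (hst : s ≠ t) (hsu : s ≠ u)
    (S T : Finset α) (hSdef : S = insert s (insert u U)) (hTdef : T = insert t (insert u U))
    (hS : M.IsBase S) (hT : M.IsBase T)
    (a : α) (ha : a ∈ ((M.exNbr S u).erase t) \ (M.exNbr T u))
    (v : α) (hv : v ∈ T) (b : α) (hb : b ∈ M.exNbr T v) :
    insert b (T.erase v) ≠ insert s (T.erase u) →
    insert b (T.erase v) ≠ insert s (T.erase t) →
    insert b (T.erase v) ≠ insert a (T.erase t) →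
    2 ≤ ((insert a (S.erase u)) \ (insert b (T.erase v))).card := by
  intro h_us h_ts h_ta
  obtain ⟨⟨hat, haS⟩, haT⟩ : (a ≠ t ∧ a ∈ M.exNbr S u) ∧ a ∉ M.exNbr T u := by simpa using ha
  have huT : u ∈ T := by simp [hTdef]
  have hau : a ≠ u := by rintro rfl; exact haT (M.self_mem_exNbr hT huT)
  have haS' : a ∉ S := M.notMem_of_mem_exNbr hS (by simp [hSdef]) haS hau
  have hvU : b = s ∨ b = a → v ∈ U := by
    intro hb_sa
    have hvt : v ≠ t := by rcases hb_sa with rfl | rfl <;> rintro rfl <;> contradiction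
    have hvu : v ≠ u := by rcases hb_sa with rfl | rfl <;> rintro rfl; exacts [h_us rfl, haT hb]
    simpa [hTdef, hvt, hvu] using hv
  subst hSdef hTdef
  simp only [Finset.mem_insert, not_or] at haS'
  obtain ⟨has, -, haU⟩ := haS'
  apply Finset.one_lt_card.2
  by_cases hbs : b = s
  · have hv := hvU (.inl hbs)
    refine ⟨a, ?_, v, ?_, ?_⟩ <;> grind
  by_cases hba : b = a
  · have hv := hvU (.inr hba)
    refine ⟨s, ?_, v, ?_, ?_⟩ <;> grind
  refine ⟨a, ?_, s, ?_, has⟩ <;> grind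

/-- Proposition: for adjacent bases `S = U + u + s`, `T = U + u + t`, if
`t ∈ N(S - u)` and `a ∈ A_u = (N(S-u) - t) \ N(T-u)`, then the basis `S - u + a`
is at distance at least 2 from every neighbor `T - v + b` of `T`, except
possibly `T - u + s`, `T - t + s` and `T - t + a`. -/
theorem stmt12 {α : Type*} [Fintype α] [DecidableEq α] (M : FinMatroid α)
    (U : Finset α) (s t u : α)
    (hs : s ∉ U) (ht : t ∉ U) (hu : u ∉ U)
    (hst : s ≠ t) (hsu : s ≠ u) (htu : t ≠ u)
    (S T : Finset α) (hSdef : S = insert s (insert u U)) (hTdef : T = insert t (insert u U))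
    (hS : M.IsBase S) (hT : M.IsBase T)
    (htN : t ∈ M.exNbr S u)
    (a : α) (ha : a ∈ ((M.exNbr S u).erase t) \ (M.exNbr T u))
    (v : α) (hv : v ∈ T) (b : α) (hb : b ∈ M.exNbr T v) :
    insert b (T.erase v) ≠ insert s (T.erase u) →
    insert b (T.erase v) ≠ insert s (T.erase t) →
    insert b (T.erase v) ≠ insert a (T.erase t) →
    2 ≤ ((insert a (S.erase u)) \ (insert b (T.erase v))).card :=
  stmt12_general M U s t u hs hu hst hsu S T hSdef hTdef hS hT a ha v hv b hb
end

section
/- For the rank-3 matroid on 14 elements defined by the vectors s=(1,0,0), t=(0,1,0), u=(0,0,1), u'=(1,1,1), v_1=...=v_5=(0,1,0), w_1=...=w_5=(1,0,0) in R^3 (bases are label-sets of linearly independent triples), the basis exchange walk has Ollivier–Ricci curvature κ ≤ -1/21. In particular, there exists a linear (hence representable) matroid whose basis exchange walk is negatively curved. -/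
open scoped Classical BigOperators

/-- The 14-element ground set `{s, t, u, u', v_1, ..., v_5, w_1, ..., w_5}`. -/
inductive El
  | s | t | u | u' | v (i : Fin 5) | w (i : Fin 5)
  deriving DecidableEq, Fintype

/-- The vectors in `ℝ³` realizing the matroid. -/
noncomputable def vec : El → (Fin 3 → ℝ)
  | El.s => ![1, 0, 0]
  | El.t => ![0, 1, 0]
  | El.u => ![0, 0, 1]
  | El.u' => ![1, 1, 1]
  | El.v _ => ![0, 1, 0]
  | El.w _ => ![1, 0, 0]

section Aux16

open Finset

/-- The distinguished bases. -/
abbrev S16 : Finset El := {El.s, El.u, El.u'}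
abbrev T16 : Finset El := {El.t, El.u, El.u'}
/-- The set defining the Lipschitz test function. -/
abbrev Z16 : Finset El := {El.s, El.v 0, El.v 1, El.v 2, El.v 3, El.v 4}

/-- The Lipschitz test function. -/
noncomputable def fZ (B : Finset El) : ℝ := ((B ∩ Z16).card : ℝ)

/-- Cards and test-function sums over the relevant up-sets. -/
abbrev UA16 : Finset (Finset El) := ((Finset.univ : Finset El) \ {El.u, El.u'}).image
    (fun x => insert x ({El.u, El.u'} : Finset El))
abbrev US2 : Finset (Finset El) := ({El.u, El.t, El.v 0, El.v 1, El.v 2, El.v 3, El.v 4} : Finset El).image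
    (fun x => insert x ({El.s, El.u'} : Finset El))
abbrev US3 : Finset (Finset El) := ({El.u', El.t, El.v 0, El.v 1, El.v 2, El.v 3, El.v 4} : Finset El).image
    (fun x => insert x ({El.s, El.u} : Finset El))
abbrev UT2 : Finset (Finset El) := ({El.u, El.s, El.w 0, El.w 1, El.w 2, El.w 3, El.w 4} : Finset El).image
    (fun x => insert x ({El.t, El.u'} : Finset El))
abbrev UT3 : Finset (Finset El) := ({El.u', El.s, El.w 0, El.w 1, El.w 2, El.w 3, El.w 4} : Finset El).image
    (fun x => insert x ({El.t, El.u} : Finset El))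


lemma fZ_lip (x y : Finset El) : fZ x - fZ y ≤ FinMatroid.dist x y := by
  have hsub : x ∩ Z16 ⊆ (x \ y) ∪ (y ∩ Z16) := by
    intro z hz
    simp only [Finset.mem_inter, Finset.mem_sdiff, Finset.mem_union] at *
    tauto
  have h := (Finset.card_le_card hsub).trans (Finset.card_union_le _ _)
  have h' : (( x ∩ Z16).card : ℝ) ≤ ((x \ y).card : ℝ) + ((y ∩ Z16).card : ℝ) := by
    exact_mod_cast h
  simp only [fZ, FinMatroid.dist]
  linarith

/-- Linear independence of three vectors from a nonzero determinant. -/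
lemma liE (a b c : Fin 3 → ℝ) (h : (Matrix.of ![a, b, c]).det ≠ 0) :
    LinearIndependent ℝ ![a, b, c] := by
  have h1 : IsUnit (Matrix.of ![a, b, c]) :=
    (Matrix.isUnit_iff_isUnit_det _).mpr (isUnit_iff_ne_zero.mpr h)
  exact Matrix.linearIndependent_rows_iff_isUnit.mpr h1

/-- Abbreviation for the hypothesis of the theorem. -/
def HB (M : FinMatroid El) : Prop := ∀ B : Finset El, M.IsBase B ↔
      (B.card = 3 ∧ LinearIndependent ℝ (fun x : {y // y ∈ B} => vec x.1))

lemma isBase_of (M : FinMatroid El) (hbase : HB M) (a b c : El)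
    (h : LinearIndependent ℝ ![vec a, vec b, vec c]) : M.IsBase {a, b, c} := by
  have h01 : vec a ≠ vec b := by
    intro he
    have : (0 : Fin 3) = 1 := h.injective (by simpa using he)
    simp at this
  have h02 : vec a ≠ vec c := by
    intro he
    have : (0 : Fin 3) = 2 := h.injective (by simpa using he)
    simp at this
  have h12 : vec b ≠ vec c := by
    intro he
    have : (1 : Fin 3) = 2 := h.injective (by simpa using he)
    simp at this
  have hab : a ≠ b := fun h' => h01 (by rw [h'])
  have hac : a ≠ c := fun h' => h02 (by rw [h'])
  have hbc : b ≠ c := fun h' => h12 (by rw [h'])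
  have hmem : ∀ i : Fin 3, ![a, b, c] i ∈ ({a, b, c} : Finset El) := by
    intro i; fin_cases i <;> simp
  let e : Fin 3 ≃ {y // y ∈ ({a, b, c} : Finset El)} := by
    refine Equiv.ofBijective (fun i => ⟨![a, b, c] i, hmem i⟩) ⟨?_, ?_⟩
    · intro i j hij
      have hval : ![a, b, c] i = ![a, b, c] j := congrArg Subtype.val hij
      fin_cases i <;> fin_cases j <;> simp_all
    · rintro ⟨y, hy⟩
      simp only [Finset.mem_insert, Finset.mem_singleton] at hy
      rcases hy with rfl | rfl | rfl
      · exact ⟨0, rfl⟩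
      · exact ⟨1, rfl⟩
      · exact ⟨2, rfl⟩
  rw [hbase]
  refine ⟨?_, ?_⟩
  · rw [Finset.card_insert_of_notMem (by simp [hab, hac]),
      Finset.card_insert_of_notMem (by simp [hbc]), Finset.card_singleton]
  · exact (linearIndependent_equiv' e (by funext i; fin_cases i <;> rfl)).mp h

lemma vec_inj (M : FinMatroid El) (hbase : HB M) {B : Finset El} (hB : M.IsBase B)
    {x y : El} (hx : x ∈ B) (hy : y ∈ B) (hvec : vec x = vec y) : x = y := by
  have hli := ((hbase B).mp hB).2
  exact congrArg Subtype.val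
    (hli.injective (a₁ := ⟨x, hx⟩) (a₂ := ⟨y, hy⟩) hvec)

lemma base_xuu' (M : FinMatroid El) (hbase : HB M) (x : El)
    (hxu : x ≠ El.u) (hxu' : x ≠ El.u') : M.IsBase {x, El.u, El.u'} := by
  apply isBase_of M hbase
  have hx : vec x = ![1, 0, 0] ∨ vec x = ![0, 1, 0] := by
    rcases x with _ | _ | _ | _ | i | i
    · exact Or.inl rfl
    · exact Or.inr rfl
    · exact absurd rfl hxu
    · exact absurd rfl hxu'
    · exact Or.inr rfl
    · exact Or.inl rfl
  rcases hx with h | h <;> rw [h] <;> apply liE <;>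
    norm_num [vec, Matrix.det_fin_three, Matrix.vecHead, Matrix.vecTail, Matrix.cons_val_two]

/-- Generic computation of the set of bases containing a given 2-set. -/
lemma up_gen (M : FinMatroid El) (hbase : HB M) (a b : El) (X : Finset El)
    (hXab : ∀ x ∈ X, x ∉ ({a, b} : Finset El))
    (hab2 : ({a, b} : Finset El).card = 2)
    (hchar : ∀ x : El, x ∉ ({a, b} : Finset El) →
      (M.IsBase (insert x {a, b}) ↔ x ∈ X)) :
    Finset.univ.filter (fun B' => M.IsBase B' ∧ ({a, b} : Finset El) ⊆ B')
      = X.image (fun x => insert x ({a, b} : Finset El)) := by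
  ext B'
  simp only [Finset.mem_filter, Finset.mem_univ, true_and, Finset.mem_image]
  constructor
  · rintro ⟨hB', hsub⟩
    have hcard : B'.card = 3 := ((hbase B').mp hB').1
    have hne : ({a, b} : Finset El) ≠ B' := by
      intro h; rw [← h] at hcard; omega
    obtain ⟨x, hxB, hxn⟩ := Finset.exists_of_ssubset (ssubset_of_subset_of_ne hsub hne)
    have hxcard : (insert x ({a, b} : Finset El)).card = 3 := by
      rw [Finset.card_insert_of_notMem hxn, hab2]
    have heq : insert x ({a, b} : Finset El) = B' :=
      Finset.eq_of_subset_of_card_le (Finset.insert_subset hxB hsub)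
        (by omega)
    refine ⟨x, ?_, heq⟩
    rw [← (hchar x hxn), heq]
    exact hB'
  · rintro ⟨x, hxX, rfl⟩
    exact ⟨(hchar x (hXab x hxX)).mpr hxX, Finset.subset_insert _ _⟩

lemma mem_pair_iff {x a b : El} :
    x ∉ ({a, b} : Finset El) ↔ x ≠ a ∧ x ≠ b := by
  simp [not_or]

/-- Bases containing {u,u'}. -/
lemma upchar1 (M : FinMatroid El) (hbase : HB M) :
    ∀ x : El, x ∉ ({El.u, El.u'} : Finset El) →
      (M.IsBase (insert x {El.u, El.u'}) ↔
        x ∈ ((Finset.univ : Finset El) \ {El.u, El.u'})) := by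
  intro x hx
  rw [mem_pair_iff] at hx
  constructor
  · intro _
    simp only [Finset.mem_sdiff, Finset.mem_univ, true_and]
    rw [mem_pair_iff]; exact hx
  · intro _
    exact base_xuu' M hbase x hx.1 hx.2

/-- Bases containing {s,u'}. -/
lemma upchar2 (M : FinMatroid El) (hbase : HB M) :
    ∀ x : El, x ∉ ({El.s, El.u'} : Finset El) →
      (M.IsBase (insert x {El.s, El.u'}) ↔
        x ∈ ({El.u, El.t, El.v 0, El.v 1, El.v 2, El.v 3, El.v 4} : Finset El)) := by
  intro x hx
  constructor
  · intro hb
    rcases x with _ | _ | _ | _ | i | i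
    · exact absurd (by decide) hx
    · decide
    · decide
    · exact absurd (by decide) hx
    · fin_cases i <;> decide
    · exfalso
      have h1 : El.w i = El.s :=
        vec_inj M hbase hb (Finset.mem_insert_self _ _) (by simp) rfl
      simp at h1
  · intro hxX
    fin_cases hxX <;>
      · apply isBase_of M hbase
        apply liE
        norm_num [vec, Matrix.det_fin_three, Matrix.vecHead, Matrix.vecTail, Matrix.cons_val_two]

/-- Bases containing {s,u}. -/
lemma upchar3 (M : FinMatroid El) (hbase : HB M) :
    ∀ x : El, x ∉ ({El.s, El.u} : Finset El) →
      (M.IsBase (insert x {El.s, El.u}) ↔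
        x ∈ ({El.u', El.t, El.v 0, El.v 1, El.v 2, El.v 3, El.v 4} : Finset El)) := by
  intro x hx
  constructor
  · intro hb
    rcases x with _ | _ | _ | _ | i | i
    · exact absurd (by decide) hx
    · decide
    · exact absurd (by decide) hx
    · decide
    · fin_cases i <;> decide
    · exfalso
      have h1 : El.w i = El.s :=
        vec_inj M hbase hb (Finset.mem_insert_self _ _) (by simp) rfl
      simp at h1
  · intro hxX
    fin_cases hxX <;>
      · apply isBase_of M hbase
        apply liE
        norm_num [vec, Matrix.det_fin_three, Matrix.vecHead, Matrix.vecTail, Matrix.cons_val_two]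

/-- Bases containing {t,u'}. -/
lemma upchar4 (M : FinMatroid El) (hbase : HB M) :
    ∀ x : El, x ∉ ({El.t, El.u'} : Finset El) →
      (M.IsBase (insert x {El.t, El.u'}) ↔
        x ∈ ({El.u, El.s, El.w 0, El.w 1, El.w 2, El.w 3, El.w 4} : Finset El)) := by
  intro x hx
  constructor
  · intro hb
    rcases x with _ | _ | _ | _ | i | i
    · decide
    · exact absurd (by decide) hx
    · decide
    · exact absurd (by decide) hx
    · exfalso
      have h1 : El.v i = El.t :=
        vec_inj M hbase hb (Finset.mem_insert_self _ _) (by simp) rfl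
      simp at h1
    · fin_cases i <;> decide
  · intro hxX
    fin_cases hxX <;>
      · apply isBase_of M hbase
        apply liE
        norm_num [vec, Matrix.det_fin_three, Matrix.vecHead, Matrix.vecTail, Matrix.cons_val_two]

/-- Bases containing {t,u}. -/
lemma upchar5 (M : FinMatroid El) (hbase : HB M) :
    ∀ x : El, x ∉ ({El.t, El.u} : Finset El) →
      (M.IsBase (insert x {El.t, El.u}) ↔
        x ∈ ({El.u', El.s, El.w 0, El.w 1, El.w 2, El.w 3, El.w 4} : Finset El)) := by
  intro x hx
  constructor
  · intro hb
    rcases x with _ | _ | _ | _ | i | i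
    · decide
    · exact absurd (by decide) hx
    · exact absurd (by decide) hx
    · decide
    · exfalso
      have h1 : El.v i = El.t :=
        vec_inj M hbase hb (Finset.mem_insert_self _ _) (by simp) rfl
      simp at h1
    · fin_cases i <;> decide
  · intro hxX
    fin_cases hxX <;>
      · apply isBase_of M hbase
        apply liE
        norm_num [vec, Matrix.det_fin_three, Matrix.vecHead, Matrix.vecTail, Matrix.cons_val_two]

lemma up_S_s (M : FinMatroid El) (hbase : HB M) :
    M.up S16 El.s =
      UA16 := by
  have he : S16.erase El.s = {El.u, El.u'} := by decide
  rw [FinMatroid.up, he]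
  exact up_gen M hbase El.u El.u' _ (by decide) (by decide) (upchar1 M hbase)

lemma up_S_u (M : FinMatroid El) (hbase : HB M) :
    M.up S16 El.u =
      US2 := by
  have he : S16.erase El.u = {El.s, El.u'} := by decide
  rw [FinMatroid.up, he]
  exact up_gen M hbase El.s El.u' _ (by decide) (by decide) (upchar2 M hbase)

lemma up_S_u' (M : FinMatroid El) (hbase : HB M) :
    M.up S16 El.u' =
      US3 := by
  have he : S16.erase El.u' = {El.s, El.u} := by decide
  rw [FinMatroid.up, he]
  exact up_gen M hbase El.s El.u _ (by decide) (by decide) (upchar3 M hbase)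

lemma up_T_t (M : FinMatroid El) (hbase : HB M) :
    M.up T16 El.t =
      UA16 := by
  have he : T16.erase El.t = {El.u, El.u'} := by decide
  rw [FinMatroid.up, he]
  exact up_gen M hbase El.u El.u' _ (by decide) (by decide) (upchar1 M hbase)

lemma up_T_u (M : FinMatroid El) (hbase : HB M) :
    M.up T16 El.u =
      UT2 := by
  have he : T16.erase El.u = {El.t, El.u'} := by decide
  rw [FinMatroid.up, he]
  exact up_gen M hbase El.t El.u' _ (by decide) (by decide) (upchar4 M hbase)

lemma up_T_u' (M : FinMatroid El) (hbase : HB M) :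
    M.up T16 El.u' =
      UT3 := by
  have he : T16.erase El.u' = {El.t, El.u} := by decide
  rw [FinMatroid.up, he]
  exact up_gen M hbase El.t El.u _ (by decide) (by decide) (upchar5 M hbase)

/-- Expectation of a function under one step of the walk. -/
lemma exp_eq (M : FinMatroid El) (B : Finset El) (f : Finset El → ℝ) :
    ∑ x : Finset El, M.step B x * f x
      = ∑ u ∈ B, (1 / (B.card : ℝ)) *
          ((1 / ((M.up B u).card : ℝ)) * ∑ x ∈ M.up B u, f x) := by
  unfold FinMatroid.step
  simp_rw [Finset.sum_mul]
  rw [Finset.sum_comm]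
  apply Finset.sum_congr rfl
  intro u _
  simp only [mul_ite, mul_zero, ite_mul, zero_mul]
  rw [Finset.sum_ite_mem, Finset.univ_inter, Finset.mul_sum, Finset.mul_sum]
  apply Finset.sum_congr rfl
  intros
  ring

lemma step_sum_one (M : FinMatroid El) (hbase : HB M) (B : Finset El)
    (hB : M.IsBase B) : ∑ x : Finset El, M.step B x = 1 := by
  have h := exp_eq M B (fun _ => 1)
  simp only [mul_one] at h
  calc ∑ x : Finset El, M.step B x = ∑ x : Finset El, M.step B x * 1 := by simp
    _ = ∑ u ∈ B, (1 / (B.card : ℝ)) *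
          ((1 / ((M.up B u).card : ℝ)) * ∑ x ∈ M.up B u, (1:ℝ)) := exp_eq M B _
    _ = ∑ u ∈ B, (1 / (B.card : ℝ)) := by
        apply Finset.sum_congr rfl
        intro u _
        have hBu : B ∈ M.up B u := by
          simp only [FinMatroid.up, Finset.mem_filter, Finset.mem_univ, true_and]
          exact ⟨hB, Finset.erase_subset _ _⟩
        have hcard : ((M.up B u).card : ℝ) ≠ 0 := by
          have : 0 < (M.up B u).card := Finset.card_pos.mpr ⟨B, hBu⟩
          exact_mod_cast this.ne'
        rw [Finset.sum_const, nsmul_eq_mul, mul_one]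
        field_simp
    _ = 1 := by
        rw [Finset.sum_const, nsmul_eq_mul]
        have hc : B.card = 3 := ((hbase B).mp hB).1
        rw [hc]; norm_num

lemma step_nonneg (M : FinMatroid El) (B x : Finset El) : 0 ≤ M.step B x := by
  apply Finset.sum_nonneg
  intro u _
  apply mul_nonneg (by positivity)
  split <;> positivity

lemma cost_nonneg {μ ν : Finset El → ℝ}
    {π : Finset El → Finset El → ℝ} (hc : FinMatroid.IsCoupling μ ν π) :
    0 ≤ FinMatroid.cost π := by
  apply Finset.sum_nonneg; intro x _
  apply Finset.sum_nonneg; intro y _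
  exact mul_nonneg (hc.1 x y) (Nat.cast_nonneg _)

lemma bddBelow_couplings (μ ν : Finset El → ℝ) :
    BddBelow {c | ∃ π, FinMatroid.IsCoupling μ ν π ∧ FinMatroid.cost π = c} := by
  refine ⟨0, ?_⟩
  rintro c ⟨π, hc, rfl⟩
  exact cost_nonneg hc

/-- Cost of any coupling is at least the difference of expectations of `fZ`. -/
lemma cost_ge (μ ν : Finset El → ℝ) (π : Finset El → Finset El → ℝ)
    (hc : FinMatroid.IsCoupling μ ν π) :
    (∑ x : Finset El, μ x * fZ x) - (∑ y : Finset El, ν y * fZ y)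
      ≤ FinMatroid.cost π := by
  obtain ⟨hpos, hrow, hcol⟩ := hc
  have key : ∀ x y : Finset El, π x y * (fZ x - fZ y) ≤ π x y * FinMatroid.dist x y :=
    fun x y => mul_le_mul_of_nonneg_left (fZ_lip x y) (hpos x y)
  have h1 : (∑ x : Finset El, μ x * fZ x) - (∑ y : Finset El, ν y * fZ y)
      = ∑ x : Finset El, ∑ y : Finset El, π x y * (fZ x - fZ y) := by
    have hA : ∑ x : Finset El, μ x * fZ x
        = ∑ x : Finset El, ∑ y : Finset El, π x y * fZ x := by
      apply Finset.sum_congr rfl; intro x _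
      rw [← Finset.sum_mul, hrow x]
    have hB : ∑ y : Finset El, ν y * fZ y
        = ∑ x : Finset El, ∑ y : Finset El, π x y * fZ y := by
      rw [Finset.sum_comm]
      apply Finset.sum_congr rfl; intro y _
      rw [← Finset.sum_mul, hcol y]
    rw [hA, hB, ← Finset.sum_sub_distrib]
    apply Finset.sum_congr rfl; intro x _
    rw [← Finset.sum_sub_distrib]
    apply Finset.sum_congr rfl; intro y _
    ring
  rw [h1]
  apply Finset.sum_le_sum; intro x _
  apply Finset.sum_le_sum; intro y _
  exact key x y

set_option maxHeartbeats 1000000 in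
lemma cardUA16 : UA16.card = 12 := by decide
set_option maxHeartbeats 1000000 in
lemma cardUS2 : US2.card = 7 := by decide
set_option maxHeartbeats 1000000 in
lemma cardUS3 : US3.card = 7 := by decide
set_option maxHeartbeats 1000000 in
lemma cardUT2 : UT2.card = 7 := by decide
set_option maxHeartbeats 1000000 in
lemma cardUT3 : UT3.card = 7 := by decide

set_option maxHeartbeats 1000000 in
lemma sumNUA16 : ∑ x ∈ UA16, (x ∩ Z16).card = 6 := by decide
set_option maxHeartbeats 1000000 in
lemma sumNUS2 : ∑ x ∈ US2, (x ∩ Z16).card = 12 := by decide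
set_option maxHeartbeats 1000000 in
lemma sumNUS3 : ∑ x ∈ US3, (x ∩ Z16).card = 12 := by decide
set_option maxHeartbeats 1000000 in
lemma sumNUT2 : ∑ x ∈ UT2, (x ∩ Z16).card = 1 := by decide
set_option maxHeartbeats 1000000 in
lemma sumNUT3 : ∑ x ∈ UT3, (x ∩ Z16).card = 1 := by decide

lemma sumfUA16 : ∑ x ∈ UA16, fZ x = 6 := by
  simp only [fZ]; rw [← Nat.cast_sum, sumNUA16]; norm_num
lemma sumfUS2 : ∑ x ∈ US2, fZ x = 12 := by
  simp only [fZ]; rw [← Nat.cast_sum, sumNUS2]; norm_num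
lemma sumfUS3 : ∑ x ∈ US3, fZ x = 12 := by
  simp only [fZ]; rw [← Nat.cast_sum, sumNUS3]; norm_num
lemma sumfUT2 : ∑ x ∈ UT2, fZ x = 1 := by
  simp only [fZ]; rw [← Nat.cast_sum, sumNUT2]; norm_num
lemma sumfUT3 : ∑ x ∈ UT3, fZ x = 1 := by
  simp only [fZ]; rw [← Nat.cast_sum, sumNUT3]; norm_num

set_option maxHeartbeats 1000000 in
lemma cardUnivEl : (Finset.univ : Finset El).card = 14 := by decide
lemma distS16T16 : ((S16 : Finset El) \ T16).card = 1 := by decide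

end Aux16

set_option maxHeartbeats 1000000

/-- The basis exchange walk on the rank-3 linear matroid of the vectors
`s = (1,0,0)`, `t = (0,1,0)`, `u = (0,0,1)`, `u' = (1,1,1)`,
`v_i = (0,1,0)`, `w_i = (1,0,0)` in `ℝ³` has Ollivier–Ricci curvature at most
`-1/21`; in particular there is a representable matroid whose basis exchange
walk is negatively curved. -/
theorem stmt16 (M : FinMatroid El)
    (hbase : ∀ B : Finset El, M.IsBase B ↔
      (B.card = 3 ∧ LinearIndependent ℝ (fun x : {y // y ∈ B} => vec x.1))) :
    M.curvature ≤ -1 / 21 := by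
  classical
  have hb : HB M := hbase
  have hS : M.IsBase S16 := by
    apply isBase_of M hb
    apply liE
    norm_num [vec, Matrix.det_fin_three, Matrix.vecHead, Matrix.vecTail, Matrix.cons_val_two]
  have hT : M.IsBase T16 := by
    apply isBase_of M hb
    apply liE
    norm_num [vec, Matrix.det_fin_three, Matrix.vecHead, Matrix.vecTail, Matrix.cons_val_two]
  -- expectations of the test function
  have hES : ∑ x : Finset El, M.step S16 x * fZ x = 55 / 42 := by
    rw [exp_eq]
    rw [show (S16 : Finset El).card = 3 from by decide]
    rw [Finset.sum_insert (by decide), Finset.sum_insert (by decide),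
      Finset.sum_singleton]
    rw [up_S_s M hb, up_S_u M hb, up_S_u' M hb, cardUA16, cardUS2, cardUS3,
      sumfUA16, sumfUS2, sumfUS3]
    norm_num
  have hET : ∑ x : Finset El, M.step T16 x * fZ x = 11 / 42 := by
    rw [exp_eq]
    rw [show (T16 : Finset El).card = 3 from by decide]
    rw [Finset.sum_insert (by decide), Finset.sum_insert (by decide),
      Finset.sum_singleton]
    rw [up_T_t M hb, up_T_u M hb, up_T_u' M hb, cardUA16, cardUT2, cardUT3,
      sumfUA16, sumfUT2, sumfUT3]
    norm_num
  -- lower bound on the Wasserstein distance between the two step distributions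
  have hsS : ∑ x : Finset El, M.step S16 x = 1 := step_sum_one M hb _ hS
  have hsT : ∑ x : Finset El, M.step T16 x = 1 := step_sum_one M hb _ hT
  have hcoupST : FinMatroid.IsCoupling (M.step S16) (M.step T16)
      (fun x y => M.step S16 x * M.step T16 y) := by
    refine ⟨fun x y => mul_nonneg (step_nonneg M _ _) (step_nonneg M _ _),
      fun x => ?_, fun y => ?_⟩
    · rw [← Finset.mul_sum, hsT, mul_one]
    · rw [← Finset.sum_mul, hsS, one_mul]
  have hWlb : 22 / 21 ≤ FinMatroid.W (M.step S16) (M.step T16) := by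
    refine le_csInf ⟨_, ⟨_, hcoupST, rfl⟩⟩ ?_
    rintro c ⟨π, hc, rfl⟩
    have h := cost_ge (M.step S16) (M.step T16) π hc
    rw [hES, hET] at h
    linarith
  -- a generic element of the curvature set, to ensure nonemptiness
  have hd14 : ∀ x y : Finset El, FinMatroid.dist x y ≤ 14 := by
    intro x y
    have h1 := Finset.card_le_univ (x \ y)
    have h2 : (Finset.univ : Finset El).card = 14 := cardUnivEl
    unfold FinMatroid.dist
    exact_mod_cast h1.trans_eq h2
  have hk0 : ∀ S T, M.IsBase S → M.IsBase T →
      FinMatroid.W (M.step S) (M.step T) ≤ (1 - (-13)) * FinMatroid.dist S T := by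
    intro S T hS' hT'
    by_cases hST : S = T
    · subst hST
      have hd : FinMatroid.dist S S = 0 := by simp [FinMatroid.dist]
      rw [hd, mul_zero]
      have hcoupd : FinMatroid.IsCoupling (M.step S) (M.step S)
          (fun x y => if x = y then M.step S x else 0) := by
        refine ⟨fun x y => ?_, fun x => ?_, fun y => ?_⟩
        · by_cases h : x = y
          · simpa [h] using step_nonneg M S y
          · simp [h]
        · simp
        · simp
      have hcost : FinMatroid.cost (fun x y => if x = y then M.step S x else 0) = 0 := by
        unfold FinMatroid.cost
        apply Finset.sum_eq_zero; intro x _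
        apply Finset.sum_eq_zero; intro y _
        by_cases h : x = y
        · subst h; simp [FinMatroid.dist]
        · simp [h]
      exact csInf_le (bddBelow_couplings _ _) ⟨_, hcoupd, hcost⟩
    · have hd1 : (1 : ℝ) ≤ FinMatroid.dist S T := by
        have hne : (S \ T).Nonempty := by
          rw [Finset.sdiff_nonempty]
          intro hsub
          exact hST (M.antichain S T hS' hT' hsub)
        have := Finset.card_pos.mpr hne
        unfold FinMatroid.dist
        exact_mod_cast this
      have hsS' := step_sum_one M hb S hS'
      have hsT' := step_sum_one M hb T hT'
      have hcoup' : FinMatroid.IsCoupling (M.step S) (M.step T)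
          (fun x y => M.step S x * M.step T y) := by
        refine ⟨fun x y => mul_nonneg (step_nonneg M _ _) (step_nonneg M _ _),
          fun x => ?_, fun y => ?_⟩
        · rw [← Finset.mul_sum, hsT', mul_one]
        · rw [← Finset.sum_mul, hsS', one_mul]
      have hcost14 : FinMatroid.cost (fun x y => M.step S x * M.step T y) ≤ 14 := by
        unfold FinMatroid.cost
        have hle : ∀ x y : Finset El,
            (M.step S x * M.step T y) * FinMatroid.dist x y
              ≤ (M.step S x * M.step T y) * 14 := by
          intro x y
          exact mul_le_mul_of_nonneg_left (hd14 x y)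
            (mul_nonneg (step_nonneg M _ _) (step_nonneg M _ _))
        calc ∑ x : Finset El, ∑ y : Finset El,
              (M.step S x * M.step T y) * FinMatroid.dist x y
            ≤ ∑ x : Finset El, ∑ y : Finset El, (M.step S x * M.step T y) * 14 := by
              apply Finset.sum_le_sum; intro x _
              apply Finset.sum_le_sum; intro y _
              exact hle x y
          _ = ∑ x : Finset El, M.step S x * 14 := by
              apply Finset.sum_congr rfl; intro x _
              calc ∑ y : Finset El, (M.step S x * M.step T y) * 14
                  = (∑ y : Finset El, M.step T y) * (M.step S x * 14) := by
                    rw [Finset.sum_mul]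
                    apply Finset.sum_congr rfl; intros; ring
                _ = M.step S x * 14 := by rw [hsT']; ring
          _ = (∑ x : Finset El, M.step S x) * 14 := (Finset.sum_mul _ _ _).symm
          _ = 14 := by rw [hsS']; ring
      have hWc : FinMatroid.W (M.step S) (M.step T)
          ≤ FinMatroid.cost (fun x y => M.step S x * M.step T y) :=
        csInf_le (bddBelow_couplings _ _) ⟨_, hcoup', rfl⟩
      have : (14 : ℝ) ≤ (1 - (-13)) * FinMatroid.dist S T := by nlinarith
      linarith
  -- conclude
  unfold FinMatroid.curvature
  refine csSup_le ⟨-13, hk0⟩ ?_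
  rintro κ hκ
  have h1 := hκ S16 T16 hS hT
  have hd : FinMatroid.dist S16 T16 = 1 := by
    unfold FinMatroid.dist
    rw [distS16T16]; norm_num
  rw [hd, mul_one] at h1
  linarith
end
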